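/- Let f be an expansive homeomorphism of a compact metric space (X, d) that is not totally disconnected (equivalently, dim(X) > 0). Then there is ε₀ > 0 such that for every ε ∈ (0, ε₀) there is a point a ∈ X with Σ^s_ε(a,d) ∩ ∂B_ε(a,d) ≠ ∅ or Σ^u_ε(a,d) ∩ ∂B_ε(a,d) ≠ ∅, where Σ^s_ε(a,d) (resp. Σ^u_ε(a,d)) denotes the connected component of W^s_ε(a,d) ∩ cl(B_ε(a,d)) (resp. W^u_ε(a,d) ∩ cl(B_ε(a,d))) containing a. -/

import Mathlib

open Filter Topology

/-- The `n`-th iterate (`n ∈ ℤ`) of a homeomorphism `f`, as a map `X → X`. -/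
def iterZ {X : Type*} [TopologicalSpace X] (f : X ≃ₜ X) (n : ℤ) : X → X :=
  ⇑(f.toEquiv ^ n)

/-- The ω-limit set of `x`: limits of `f^{nᵢ}(x)` along strictly increasing
sequences `0 < n₁ < n₂ < ⋯`. -/
def posLimitSet {X : Type*} [TopologicalSpace X] (f : X ≃ₜ X) (x : X) : Set X :=
  {y | ∃ n : ℕ → ℕ, StrictMono n ∧ 0 < n 0 ∧
    Tendsto (fun i => iterZ f (n i) x) atTop (𝓝 y)}

/-- The α-limit set of `x`: limits of `f^{-nᵢ}(x)` along strictly increasing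
sequences `0 < n₁ < n₂ < ⋯`. -/
def negLimitSet {X : Type*} [TopologicalSpace X] (f : X ≃ₜ X) (x : X) : Set X :=
  {y | ∃ n : ℕ → ℕ, StrictMono n ∧ 0 < n 0 ∧
    Tendsto (fun i => iterZ f (-(n i : ℤ)) x) atTop (𝓝 y)}

/-- `x` is recurrent if it is positively or negatively recurrent. -/
def RecurrentPt {X : Type*} [TopologicalSpace X] (f : X ≃ₜ X) (x : X) : Prop :=
  x ∈ posLimitSet f x ∨ x ∈ negLimitSet f x

/-- `f` is expansive with expansivity constant `c`. -/
def ExpansiveWith {X : Type*} [MetricSpace X] (f : X ≃ₜ X) (c : ℝ) : Prop :=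
  0 < c ∧ ∀ x y : X, x ≠ y → ∃ n : ℤ, c < dist (iterZ f n x) (iterZ f n y)

/-- `f` is expansive. -/
def Expansive {X : Type*} [MetricSpace X] (f : X ≃ₜ X) : Prop :=
  ∃ c : ℝ, ExpansiveWith f c

/-- The full orbit `{fⁿ(x) : n ∈ ℤ}` of a point. -/
def fullOrbit {X : Type*} [TopologicalSpace X] (f : X ≃ₜ X) (x : X) : Set X :=
  Set.range fun n : ℤ => iterZ f n x

/-- `E` is a minimal set: nonempty, closed, invariant (`f(E) = E`), with no proper
nonempty closed invariant subset. -/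
def IsMinimalSet {X : Type*} [TopologicalSpace X] (f : X ≃ₜ X) (E : Set X) : Prop :=
  E.Nonempty ∧ IsClosed E ∧ f '' E = E ∧
    ∀ E' ⊆ E, E'.Nonempty → IsClosed E' → f '' E' = E' → E' = E

/-- `x` is almost periodic: the closure of its orbit is a minimal set. -/
def AlmostPeriodicPt {X : Type*} [TopologicalSpace X] (f : X ≃ₜ X) (x : X) : Prop :=
  IsMinimalSet f (closure (fullOrbit f x))

/-- The left shift `σ` on `ℤ → F`, as a homeomorphism. -/
def shiftH (F : Type*) [TopologicalSpace F] : (ℤ → F) ≃ₜ (ℤ → F) where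
  toFun x n := x (n + 1)
  invFun x n := x (n - 1)
  left_inv x := by funext n; simp
  right_inv x := by funext n; simp
  continuous_toFun := continuous_pi fun n => continuous_apply (n + 1)
  continuous_invFun := continuous_pi fun n => continuous_apply (n - 1)

/-- The `n`-th power (`n ∈ ℕ`) of a homeomorphism, as a homeomorphism. -/
def hpow {X : Type*} [TopologicalSpace X] (f : X ≃ₜ X) : ℕ → X ≃ₜ X
  | 0 => Homeomorph.refl X
  | n + 1 => (hpow f n).trans f

/-- The local stable set `W^s_ε(x)`. -/
def localStable {X : Type*} [MetricSpace X] (f : X ≃ₜ X) (ε : ℝ) (x : X) : Set X :=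
  {y | ∀ n : ℕ, dist (iterZ f n x) (iterZ f n y) ≤ ε}

/-- The local unstable set `W^u_ε(x)`. -/
def localUnstable {X : Type*} [MetricSpace X] (f : X ≃ₜ X) (ε : ℝ) (x : X) : Set X :=
  {y | ∀ n : ℕ, dist (iterZ f (-(n : ℤ)) x) (iterZ f (-(n : ℤ)) y) ≤ ε}

/-- The stable set `W^s(x)`. -/
def stableSet {X : Type*} [MetricSpace X] (f : X ≃ₜ X) (x : X) : Set X :=
  {y | Tendsto (fun n : ℕ => dist (iterZ f n x) (iterZ f n y)) atTop (𝓝 0)}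

/-- The unstable set `W^u(x)`. -/
def unstableSet {X : Type*} [MetricSpace X] (f : X ≃ₜ X) (x : X) : Set X :=
  {y | Tendsto (fun n : ℕ => dist (iterZ f (-(n : ℤ)) x) (iterZ f (-(n : ℤ)) y)) atTop (𝓝 0)}

/-- `f` has the pseudo orbit tracing property. -/
def POTP {X : Type*} [MetricSpace X] (f : X ≃ₜ X) : Prop :=
  ∀ ε > (0 : ℝ), ∃ δ > (0 : ℝ), ∀ u : ℤ → X,
    (∀ i : ℤ, dist (f (u i)) (u (i + 1)) < δ) →
    ∃ x : X, ∀ i : ℤ, dist (iterZ f i x) (u i) < ε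

/-! Mañé's argument. Fix a nondegenerate continuum `C` and `ε` below an expansivity constant.
Given `M`, a small enough subcontinuum `D ⊆ C` keeps all its iterates `f^j D`, `|j| ≤ M`, of
diameter `< ε`, while expansivity makes some `f^j D` wider than `ε`. At the first such time
`|j| = m > M`, the continuum `f^j D` reaches distance `ε` from one of its points `a`, and all its
points stay `ε`-close to `a` during the `M` steps back towards time `0`. One of the two directions
(`j > 0`, giving unstable sets, or `j < 0`, giving stable ones) occurs for every `M`; a Hausdorff
limit of these continua is a continuum through a point `a`, reaching distance `ε` from `a`, whose
points stay `ε`-close to `a` at all times `k ≥ 1`. Boundary bumping inside it, in the closure of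
`B_ε(a)`, gives the component. -/

open Set Metric TopologicalSpace

theorem forall_or_forall_of_antitone {P Q : ℕ → Prop} (hP : Antitone P) (hQ : Antitone Q)
    (h : ∀ n, P n ∨ Q n) : (∀ n, P n) ∨ ∀ n, Q n := by
  by_contra! ⟨⟨m, hm⟩, ⟨n, hn⟩⟩
  rcases h (max m n) with h | h
  exacts [hm (hP (le_max_left m n) h), hn (hQ (le_max_right m n) h)]

section Iterates

variable {X : Type*} [TopologicalSpace X]

theorem iterZ_eq_coe_zpow (f : X ≃ₜ X) (n : ℤ) : iterZ f n = ⇑(f ^ n) := by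
  let toPerm : (X ≃ₜ X) →* Equiv.Perm X :=
    { toFun := Homeomorph.toEquiv, map_one' := rfl, map_mul' := fun _ _ => rfl }
  exact congrArg DFunLike.coe (map_zpow toPerm f n).symm

theorem continuous_iterZ (f : X ≃ₜ X) (n : ℤ) : Continuous (iterZ f n) := by
  rw [iterZ_eq_coe_zpow]
  exact (f ^ n).continuous

@[simp]
theorem iterZ_zero (f : X ≃ₜ X) (x : X) : iterZ f 0 x = x := rfl

theorem iterZ_add (f : X ≃ₜ X) (m n : ℤ) (x : X) :
    iterZ f (m + n) x = iterZ f m (iterZ f n x) := by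
  simp only [iterZ_eq_coe_zpow, zpow_add, Homeomorph.mul_apply]

theorem iterZ_symm (f : X ≃ₜ X) (n : ℤ) : iterZ f.symm n = iterZ f (-n) := by
  rw [iterZ_eq_coe_zpow, iterZ_eq_coe_zpow, zpow_neg, ← inv_zpow]
  rfl

end Iterates

theorem localUnstable_symm {X : Type*} [MetricSpace X] (f : X ≃ₜ X) (ε : ℝ) (a : X) :
    localUnstable f.symm ε a = localStable f ε a := by
  ext y
  simp only [localUnstable, localStable, iterZ_symm, neg_neg, mem_ofPred_eq]

section BoundaryBumping

variable {X : Type*} [TopologicalSpace X] [T2Space X]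

theorem exists_isClopen_disjoint_of_disjoint_connectedComponent [CompactSpace X] {x : X}
    {D : Set X} (hD : IsClosed D) (h : Disjoint (connectedComponent x) D) :
    ∃ V : Set X, IsClopen V ∧ x ∈ V ∧ Disjoint V D := by
  rw [connectedComponent_eq_iInter_isClopen, disjoint_iff_inter_eq_empty, inter_comm] at h
  obtain ⟨t, ht⟩ := hD.isCompact.elim_finite_subfamily_closed _ (fun s => s.2.1.1) h
  refine ⟨⋂ s ∈ t, (s : Set X), isClopen_biInter_finset fun s _ => s.2.1,
    mem_iInter₂.2 fun s _ => s.2.2, ?_⟩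
  rw [disjoint_iff_inter_eq_empty, inter_comm, ht]

theorem IsCompact.connectedComponentIn_inter_frontier_nonempty {K F : Set X}
    (hKc : IsCompact K) (hK : IsPreconnected K) (hF : IsClosed F) {a : X} (haK : a ∈ K)
    (haF : a ∈ F) (hKF : ¬ K ⊆ F) : (connectedComponentIn (K ∩ F) a ∩ frontier F).Nonempty := by
  by_contra h
  have : CompactSpace ↥(K ∩ F) := isCompact_iff_compactSpace.1 (hKc.inter_right hF)
  let p : ↥(K ∩ F) := ⟨a, haK, haF⟩
  have hcomp : Disjoint (connectedComponent p) (Subtype.val ⁻¹' frontier F) := by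
    refine disjoint_left.2 fun z hz hzF => h ⟨z, ?_, hzF⟩
    rw [connectedComponentIn_eq_image (show a ∈ K ∩ F from ⟨haK, haF⟩)]
    exact mem_image_of_mem _ hz
  obtain ⟨V, hV, hpV, hVF⟩ := exists_isClopen_disjoint_of_disjoint_connectedComponent
    (isClosed_frontier.preimage continuous_subtype_val) hcomp
  obtain ⟨U, hU, rfl⟩ := isOpen_induced_iff.1 hV.isOpen
  set W := Subtype.val '' (Subtype.val ⁻¹' U : Set ↥(K ∩ F))
  have hW : IsClosed W := (hV.isClosed.isCompact.image continuous_subtype_val).isClosed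
  -- The relatively clopen set `W = U ∩ K ∩ F` avoids `frontier F`, hence is open in `K`.
  have hUF : ∀ x ∈ K, x ∈ U → x ∈ F → x ∈ interior F := fun x hxK hxU hxF => by
    by_contra hx
    exact disjoint_left.1 hVF (show (⟨x, hxK, hxF⟩ : ↥(K ∩ F)) ∈ Subtype.val ⁻¹' U from hxU)
      ⟨subset_closure hxF, hx⟩
  have hcover : K ⊆ (U ∩ interior F) ∪ Wᶜ := fun x hxK => by
    by_cases hx : x ∈ W
    · obtain ⟨⟨x, hxA⟩, hxU, rfl⟩ := hx
      exact Or.inl ⟨hxU, hUF x hxK hxU hxA.2⟩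
    · exact Or.inr hx
  have hdisj : K ∩ ((U ∩ interior F) ∩ Wᶜ) = ∅ :=
    eq_empty_of_forall_notMem fun x ⟨hxK, ⟨hxU, hxF⟩, hxW⟩ =>
      hxW ⟨⟨x, hxK, interior_subset hxF⟩, hxU, rfl⟩
  rcases isPreconnected_iff_subset_of_disjoint.1 hK _ _ (hU.inter isOpen_interior)
    hW.isOpen_compl hcover hdisj with hKU | hKW
  · exact hKF fun x hx => interior_subset (hKU hx).2
  · exact hKW haK ⟨p, hpV, rfl⟩

theorem IsCompact.connectedComponentIn_inter_closure_frontier_nonempty {K U : Set X}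
    (hKc : IsCompact K) (hK : IsPreconnected K) (hU : IsOpen U) {a : X} (haK : a ∈ K)
    (haU : a ∈ closure U) (hKU : ¬ K ⊆ U) :
    (connectedComponentIn (K ∩ closure U) a ∩ frontier U).Nonempty := by
  by_cases hKcl : K ⊆ closure U
  · obtain ⟨b, hbK, hbU⟩ := not_subset.1 hKU
    refine ⟨b, hK.subset_connectedComponentIn haK (subset_inter subset_rfl hKcl) hbK, ?_⟩
    rw [hU.frontier_eq]
    exact ⟨hKcl hbK, hbU⟩
  · obtain ⟨z, hz, hzU⟩ :=
      hKc.connectedComponentIn_inter_frontier_nonempty hK isClosed_closure haK haU hKcl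
    exact ⟨z, hz, frontier_closure_subset hzU⟩

end BoundaryBumping

theorem exists_isCompact_isPreconnected_nontrivial {X : Type*} [TopologicalSpace X]
    [CompactSpace X] (hX : ¬ TotallyDisconnectedSpace X) :
    ∃ C : Set X, IsCompact C ∧ IsPreconnected C ∧ C.Nontrivial := by
  by_contra! h
  refine hX ⟨fun t _ ht => ?_⟩
  exact (h _ isClosed_closure.isCompact ht.closure).anti subset_closure

theorem IsCompact.exists_nontrivial_subcontinuum_dist_lt {X : Type*} [MetricSpace X]
    {C : Set X} (hCc : IsCompact C) (hC : IsPreconnected C) (hCnt : C.Nontrivial) {δ : ℝ}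
    (hδ : 0 < δ) : ∃ D ⊆ C, IsCompact D ∧ IsPreconnected D ∧ D.Nontrivial ∧
      ∀ u ∈ D, ∀ v ∈ D, dist u v < δ := by
  obtain ⟨x, hx, y, hy, hxy⟩ := hCnt
  set r := min (δ / 3) (dist x y / 2)
  have hr : 0 < r := lt_min (by linarith) (by linarith [dist_pos.2 hxy])
  have hyr : ¬ C ⊆ ball x r := fun h => by
    linarith [mem_ball'.1 (h hy), min_le_right (δ / 3) (dist x y / 2), dist_pos.2 hxy]
  have hxr : x ∈ closure (ball x r) := subset_closure (mem_ball_self hr)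
  obtain ⟨z, hz, hzr⟩ :=
    hCc.connectedComponentIn_inter_closure_frontier_nonempty hC isOpen_ball hx hxr hyr
  set D := connectedComponentIn (C ∩ closure (ball x r)) x
  have hDC : closure D ⊆ C :=
    closure_minimal ((connectedComponentIn_subset _ _).trans inter_subset_left) hCc.isClosed
  have hDr : closure D ⊆ closedBall x r :=
    closure_minimal ((connectedComponentIn_subset _ _).trans
      (inter_subset_right.trans closure_ball_subset_closedBall)) isClosed_closedBall
  refine ⟨closure D, hDC, hCc.of_isClosed_subset isClosed_closure hDC,
    isPreconnected_connectedComponentIn.closure, ?_, fun u hu v hv => ?_⟩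
  · refine ⟨x, subset_closure (mem_connectedComponentIn ⟨hx, hxr⟩), z, subset_closure hz, ?_⟩
    rintro rfl
    rw [isOpen_ball.frontier_eq] at hzr
    exact hzr.2 (mem_ball_self hr)
  · calc dist u v ≤ dist u x + dist v x := dist_triangle_right u v x
      _ ≤ r + r := add_le_add (hDr hu) (hDr hv)
      _ < δ := by linarith [min_le_left (δ / 3) (dist x y / 2)]

namespace TopologicalSpace.NonemptyCompacts

variable {X ι : Type*} [MetricSpace X] {l : Filter ι} {K : ι → NonemptyCompacts X}
  {L : NonemptyCompacts X}

theorem mem_of_tendsto [l.NeBot] (hK : Tendsto K l (𝓝 L)) {x : ι → X} {y : X}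
    (hx : Tendsto x l (𝓝 y)) (hxK : ∀ i, x i ∈ K i) : y ∈ L := by
  have hc : Continuous fun p : X × NonemptyCompacts X => infDist p.1 (p.2 : Set X) :=
    lipschitz_infDist.continuous
  have h := (hc.tendsto (y, L)).comp (hx.prodMk_nhds hK)
  have h0 : infDist y L = 0 :=
    tendsto_nhds_unique h (by simp [Function.comp_def, infDist_zero_of_mem (hxK _)])
  exact (L.isCompact.isClosed.mem_iff_infDist_zero L.nonempty).2 h0

theorem exists_tendsto_of_mem (hK : Tendsto K l (𝓝 L)) {y : X} (hy : y ∈ L) :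
    ∃ x : ι → X, (∀ i, x i ∈ K i) ∧ Tendsto x l (𝓝 y) := by
  choose x hxK hx using fun i => (K i).isCompact.exists_infDist_eq_dist (K i).nonempty y
  refine ⟨x, hxK, tendsto_iff_dist_tendsto_zero.2 ?_⟩
  have h := ((lipschitz_infDist_set y).continuous.tendsto L).comp hK
  rw [infDist_zero_of_mem hy] at h
  simpa [Function.comp_def, hx, dist_comm] using h

theorem eventually_subset_of_tendsto (hK : Tendsto K l (𝓝 L)) {U : Set X} (hU : IsOpen U)
    (hLU : (L : Set X) ⊆ U) : ∀ᶠ i in l, (K i : Set X) ⊆ U := by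
  obtain ⟨δ, hδ, hδU⟩ := L.isCompact.exists_thickening_subset_open hU hLU
  filter_upwards [Metric.tendsto_nhds.1 hK δ hδ] with i hi x hx
  refine hδU ((mem_thickening_iff_infDist_lt L.nonempty).2 ?_)
  exact (infDist_le_hausdorffDist_of_mem hx (edist_ne_top (K i) L)).trans_lt hi

theorem isPreconnected_of_tendsto [l.NeBot] (hK : Tendsto K l (𝓝 L))
    (hKc : ∀ i, IsPreconnected (K i : Set X)) : IsPreconnected (L : Set X) := by
  rw [isPreconnected_iff_subset_of_fully_disjoint_closed L.isCompact.isClosed]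
  intro A B hA hB hLAB hAB
  by_contra! hL
  obtain ⟨U, V, hU, hV, hAU, hBV, hUV⟩ := normal_separation hA hB hAB
  obtain ⟨p, hpL, hpB⟩ := not_subset.1 hL.2
  obtain ⟨q, hqL, hqA⟩ := not_subset.1 hL.1
  obtain ⟨x, hxK, hx⟩ := exists_tendsto_of_mem hK hpL
  obtain ⟨y, hyK, hy⟩ := exists_tendsto_of_mem hK hqL
  obtain ⟨i, hiUV, hxi, hyi⟩ :=
    ((eventually_subset_of_tendsto hK (hU.union hV) (hLAB.trans (union_subset_union hAU hBV))).and
      ((hx.eventually (hU.mem_nhds (hAU ((hLAB hpL).resolve_right hpB)))).and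
        (hy.eventually (hV.mem_nhds (hBV ((hLAB hqL).resolve_left hqA)))))).exists
  obtain ⟨z, -, hzU, hzV⟩ := hKc i U V hU hV hiUV ⟨x i, hxK i, hxi⟩ ⟨y i, hyK i, hyi⟩
  exact disjoint_left.1 hUV hzU hzV

end TopologicalSpace.NonemptyCompacts

section Expansive

variable {X : Type*} [MetricSpace X]

/-- Time `0` is meant to be left out of `T`: `K` reaches distance `ε` from `a`, and only its part
in the closure of `B_ε(a)` will end up in `W^u_ε(a)`. -/
structure IsUnstableContinuum (g : X ≃ₜ X) (ε : ℝ) (T : Set ℕ) (a : X) (K : Set X) : Prop where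
  isCompact : IsCompact K
  isPreconnected : IsPreconnected K
  mem : a ∈ K
  exists_le_dist : ∃ b ∈ K, ε ≤ dist a b
  dist_le : ∀ y ∈ K, ∀ k ∈ T, dist (iterZ g (-k) a) (iterZ g (-k) y) ≤ ε

theorem IsUnstableContinuum.mono {g : X ≃ₜ X} {ε : ℝ} {S T : Set ℕ} {a : X} {K : Set X}
    (h : IsUnstableContinuum g ε T a K) (hST : S ⊆ T) : IsUnstableContinuum g ε S a K :=
  { h with dist_le := fun y hy k hk => h.dist_le y hy k (hST hk) }

theorem antitone_exists_isUnstableContinuum (g : X ≃ₜ X) (ε : ℝ) :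
    Antitone fun M : ℕ => ∃ a K, IsUnstableContinuum g ε (Icc 1 M) a K :=
  fun _ _ hMN ⟨a, K, h⟩ => ⟨a, K, h.mono (Icc_subset_Icc_right hMN)⟩

theorem IsUnstableContinuum.connectedComponentIn_inter_frontier_nonempty {g : X ≃ₜ X} {ε : ℝ}
    {a : X} {K : Set X} (h : IsUnstableContinuum g ε (Ici 1) a K) (hε : 0 < ε) :
    (connectedComponentIn (localUnstable g ε a ∩ closure (ball a ε)) a ∩
      frontier (ball a ε)).Nonempty := by
  have hsub : K ∩ closure (ball a ε) ⊆ localUnstable g ε a ∩ closure (ball a ε) := by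
    rintro y ⟨hyK, hy⟩
    refine ⟨fun n => ?_, hy⟩
    rcases Nat.eq_zero_or_pos n with rfl | hn
    · simpa [dist_comm] using closure_ball_subset_closedBall hy
    · exact h.dist_le y hyK n hn
  obtain ⟨b, hbK, hab⟩ := h.exists_le_dist
  obtain ⟨z, hz, hzF⟩ := h.isCompact.connectedComponentIn_inter_closure_frontier_nonempty
    h.isPreconnected isOpen_ball h.mem (subset_closure (mem_ball_self hε))
    fun hK => (mem_ball'.1 (hK hbK)).not_ge hab
  exact ⟨z, connectedComponentIn_mono a hsub hz, hzF⟩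

theorem exists_isUnstableContinuum_Ici [CompactSpace X] (g : X ≃ₜ X) {ε : ℝ}
    (h : ∀ M : ℕ, ∃ a K, IsUnstableContinuum g ε (Icc 1 M) a K) :
    ∃ a K, IsUnstableContinuum g ε (Ici 1) a K := by
  choose a K hK using h
  choose b hbK hab using fun M => (hK M).exists_le_dist
  let KK : ℕ → NonemptyCompacts X := fun M => ⟨⟨K M, (hK M).isCompact⟩, ⟨a M, (hK M).mem⟩⟩
  obtain ⟨⟨a₀, b₀, L⟩, -, φ, hφ, hlim⟩ :=
    isCompact_univ.tendsto_subseq (x := fun M => (a M, b M, KK M)) fun _ => mem_univ _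
  have ha : Tendsto (a ∘ φ) atTop (𝓝 a₀) := (continuous_fst.tendsto _).comp hlim
  have hb : Tendsto (b ∘ φ) atTop (𝓝 b₀) :=
    ((continuous_fst.comp continuous_snd).tendsto _).comp hlim
  have hL : Tendsto (KK ∘ φ) atTop (𝓝 L) :=
    ((continuous_snd.comp continuous_snd).tendsto _).comp hlim
  have hLc : IsPreconnected (L : Set X) :=
    NonemptyCompacts.isPreconnected_of_tendsto hL fun i => (hK (φ i)).isPreconnected
  have haL : a₀ ∈ L := NonemptyCompacts.mem_of_tendsto hL ha fun i => (hK (φ i)).mem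
  have hbL : b₀ ∈ L := NonemptyCompacts.mem_of_tendsto hL hb fun i => hbK (φ i)
  have hab₀ : ε ≤ dist a₀ b₀ := ge_of_tendsto (ha.dist hb) (.of_forall fun i => hab (φ i))
  refine ⟨a₀, L, ⟨L.isCompact, hLc, haL, ⟨b₀, hbL, hab₀⟩, fun y hy k hk => ?_⟩⟩
  obtain ⟨x, hxK, hx⟩ := NonemptyCompacts.exists_tendsto_of_mem hL hy
  have hcont := (continuous_iterZ g (-k)).tendsto
  refine le_of_tendsto (((hcont _).comp ha).dist ((hcont _).comp hx)) ?_
  filter_upwards [hφ.tendsto_atTop.eventually_ge_atTop k] with i hi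
  exact (hK (φ i)).dist_le _ (hxK i) k ⟨hk, hi⟩

theorem isUnstableContinuum_image_iterZ (g : X ≃ₜ X) {ε : ℝ} {D : Set X} (hDc : IsCompact D)
    (hD : IsPreconnected D) {m M : ℕ} (hM : M < m) {u v : X} (hu : u ∈ D) (hv : v ∈ D)
    (huv : ε ≤ dist (iterZ g m u) (iterZ g m v))
    (hsmall : ∀ j < m, ∀ w ∈ D, ∀ w' ∈ D, dist (iterZ g j w) (iterZ g j w') ≤ ε) :
    IsUnstableContinuum g ε (Icc 1 M) (iterZ g m u) (iterZ g m '' D) := by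
  refine ⟨hDc.image (continuous_iterZ g m), hD.image _ (continuous_iterZ g m).continuousOn,
    mem_image_of_mem _ hu, ⟨_, mem_image_of_mem _ hv, huv⟩, ?_⟩
  rintro _ ⟨w, hw, rfl⟩ k ⟨hk1, hkM⟩
  rw [← iterZ_add, ← iterZ_add, show -(k : ℤ) + m = ((m - k : ℕ) : ℤ) by omega]
  exact hsmall _ (by omega) u hu w hw

theorem exists_pos_forall_dist_iterZ_lt [CompactSpace X] (f : X ≃ₜ X) (M : ℕ) {ε : ℝ}
    (hε : 0 < ε) : ∃ δ > 0, ∀ x y : X, dist x y < δ →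
      ∀ j ∈ Icc (-(M : ℤ)) M, dist (iterZ f j x) (iterZ f j y) < ε := by
  have : UniformEquicontinuous fun j : Icc (-(M : ℤ)) M => iterZ f j :=
    CompactSpace.uniformEquicontinuous_of_equicontinuous
      (equicontinuous_finite.2 fun j => continuous_iterZ f j)
  obtain ⟨δ, hδ, h⟩ := Metric.uniformEquicontinuous_iff.1 this ε hε
  exact ⟨δ, hδ, fun x y hxy j hj => h x y hxy ⟨j, hj⟩⟩

theorem ExpansiveWith.exists_first_separation_time {f : X ≃ₜ X} {c ε : ℝ}
    (hf : ExpansiveWith f c) (hεc : ε < c) {D : Set X} (hD : D.Nontrivial) :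
    ∃ j : ℤ, (∃ u ∈ D, ∃ v ∈ D, ε < dist (iterZ f j u) (iterZ f j v)) ∧
      ∀ i : ℤ, i.natAbs < j.natAbs → ∀ u ∈ D, ∀ v ∈ D, dist (iterZ f i u) (iterZ f i v) ≤ ε := by
  classical
  have hex : ∃ m : ℕ, ∃ j : ℤ, j.natAbs = m ∧
      ∃ u ∈ D, ∃ v ∈ D, ε < dist (iterZ f j u) (iterZ f j v) := by
    obtain ⟨u, hu, v, hv, huv⟩ := hD
    obtain ⟨j, hj⟩ := hf.2 u v huv
    exact ⟨_, j, rfl, u, hu, v, hv, hεc.trans hj⟩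
  obtain ⟨j, hj, hjD⟩ := Nat.find_spec hex
  refine ⟨j, hjD, fun i hi u hu v hv => ?_⟩
  by_contra! h
  exact Nat.find_min hex (hj ▸ hi) ⟨i, rfl, u, hu, v, hv, h⟩

theorem ExpansiveWith.exists_isUnstableContinuum [CompactSpace X] {f : X ≃ₜ X} {c ε : ℝ}
    (hf : ExpansiveWith f c) {C : Set X} (hCc : IsCompact C) (hC : IsPreconnected C)
    (hCnt : C.Nontrivial) (hε : 0 < ε) (hεc : ε < c) (M : ℕ) :
    (∃ a K, IsUnstableContinuum f ε (Icc 1 M) a K) ∨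
      ∃ a K, IsUnstableContinuum f.symm ε (Icc 1 M) a K := by
  obtain ⟨δ, hδ, hsmall⟩ := exists_pos_forall_dist_iterZ_lt f M hε
  obtain ⟨D, -, hDc, hD, hDnt, hDδ⟩ := hCc.exists_nontrivial_subcontinuum_dist_lt hC hCnt hδ
  obtain ⟨j, ⟨u, hu, v, hv, huv⟩, hmin⟩ := hf.exists_first_separation_time hεc hDnt
  have hMj : M < j.natAbs := by
    by_contra! hjM
    exact (hsmall u v (hDδ u hu v hv) j ⟨by omega, by omega⟩).not_gt huv
  rcases Int.natAbs_eq j with hj | hj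
  · refine Or.inl ⟨_, _, isUnstableContinuum_image_iterZ f hDc hD hMj hu hv ?_ ?_⟩
    · rw [← hj]; exact huv.le
    · exact fun i hi => hmin i (by omega)
  · refine Or.inr ⟨_, _, isUnstableContinuum_image_iterZ f.symm hDc hD hMj hu hv ?_ ?_⟩
    · rw [iterZ_symm, ← hj]; exact huv.le
    · exact fun i hi => by rw [iterZ_symm]; exact hmin _ (by omega)

end Expansive

/-- (Ma\~n\'e's key lemma) If an expansive homeomorphism acts on a
compact metric space that is not totally disconnected, then there is `ε₀ > 0` such that
for every `ε ∈ (0, ε₀)` some point `a` has its local stable or unstable connected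
component `Σ^s_ε(a)` (resp. `Σ^u_ε(a)`) meeting the boundary of the `ε`-ball at `a`. -/
theorem stmt_13 {X : Type*} [MetricSpace X] [CompactSpace X] (f : X ≃ₜ X)
    (hexp : Expansive f) (hX : ¬ TotallyDisconnectedSpace X) :
    ∃ ε₀ > (0 : ℝ), ∀ ε : ℝ, 0 < ε → ε < ε₀ → ∃ a : X,
      (connectedComponentIn (localStable f ε a ∩ closure (Metric.ball a ε)) a ∩
        frontier (Metric.ball a ε)).Nonempty ∨
      (connectedComponentIn (localUnstable f ε a ∩ closure (Metric.ball a ε)) a ∩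
        frontier (Metric.ball a ε)).Nonempty := by
  obtain ⟨c, hc⟩ := hexp
  obtain ⟨C, hCc, hC, hCnt⟩ := exists_isCompact_isPreconnected_nontrivial hX
  refine ⟨c, hc.1, fun ε hε hεc => ?_⟩
  rcases forall_or_forall_of_antitone (antitone_exists_isUnstableContinuum f ε)
      (antitone_exists_isUnstableContinuum f.symm ε)
      (hc.exists_isUnstableContinuum hCc hC hCnt hε hεc) with h | h
  · obtain ⟨a, K, hK⟩ := exists_isUnstableContinuum_Ici f h
    exact ⟨a, Or.inr (hK.connectedComponentIn_inter_frontier_nonempty hε)⟩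
  · obtain ⟨a, K, hK⟩ := exists_isUnstableContinuum_Ici f.symm h
    refine ⟨a, Or.inl ?_⟩
    rw [← localUnstable_symm]
    exact hK.connectedComponentIn_inter_frontier_nonempty hε
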